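/- Let L_1, L_2, L_3 be convex subsets of the graph group G_F with L_1 ∩ L_2 ≠ ∅. Then L_1L_3⁻¹ ∩ L_2L_3⁻¹ = (L_1 ∩ L_2)L_3⁻¹. -/

import Mathlib

open Pointwise

namespace GraphGroupPaper

/-- The set of commutator relators: `gᵢ` and `gⱼ` commute for every pair of distinct
`i, j` with `{i,j} ∉ F`. -/
def Rels (k : ℕ) (F : Set (Sym2 (Fin k))) : Set (FreeGroup (Fin k)) :=
  {w | ∃ i j : Fin k, i ≠ j ∧ s(i, j) ∉ F ∧
      w = FreeGroup.of i * FreeGroup.of j * (FreeGroup.of i)⁻¹ * (FreeGroup.of j)⁻¹}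

/-- The graph group `G_F` with generators `g₁, …, g_k` and relations `gᵢgⱼ = gⱼgᵢ`
for all distinct `i, j` with `{i,j} ∉ F`. -/
abbrev Grp (k : ℕ) (F : Set (Sym2 (Fin k))) := PresentedGroup (Rels k F)

/-- The generator `gᵢ` of the graph group. -/
def gen (k : ℕ) (F : Set (Sym2 (Fin k))) (i : Fin k) : Grp k F :=
  PresentedGroup.of i

/-- The group element corresponding to a symbol: `(i, true)` stands for `gᵢ`,
`(i, false)` stands for `gᵢ⁻¹`. -/
def sym (k : ℕ) (F : Set (Sym2 (Fin k))) (α : Fin k × Bool) : Grp k F :=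
  if α.2 then gen k F α.1 else (gen k F α.1)⁻¹

/-- The product of the word `l` of symbols, as an element of the graph group. -/
def wordProd (k : ℕ) (F : Set (Sym2 (Fin k))) (l : List (Fin k × Bool)) : Grp k F :=
  (l.map (sym k F)).prod

/-- `|x|` : the length of a shortest word in the symbols representing `x`. -/
noncomputable def len {k : ℕ} {F : Set (Sym2 (Fin k))} (x : Grp k F) : ℕ :=
  sInf {n | ∃ l : List (Fin k × Bool), wordProd k F l = x ∧ l.length = n}

/-- The partial order on `G_F`:  `x ≤ y` iff `|y| = |x| + |x⁻¹y|`. -/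
def le {k : ℕ} {F : Set (Sym2 (Fin k))} (x y : Grp k F) : Prop :=
  len y = len x + len (x⁻¹ * y)

/-- `m` is the meet `x ∧ y` (greatest lower bound w.r.t. `le`). -/
def IsMeet {k : ℕ} {F : Set (Sym2 (Fin k))} (x y m : Grp k F) : Prop :=
  le m x ∧ le m y ∧ ∀ w, le w x → le w y → le w m

/-- `j` is the (finite) join `x ∨ y` (least upper bound w.r.t. `le`);
`x ∨ y` is finite iff such a `j` exists. -/
def IsJoin {k : ℕ} {F : Set (Sym2 (Fin k))} (x y j : Grp k F) : Prop :=
  le x j ∧ le y j ∧ ∀ w, le x w → le y w → le j w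

/-- `j` is the (finite) join of the set `S`. -/
def IsJoinSet {k : ℕ} {F : Set (Sym2 (Fin k))} (S : Set (Grp k F)) (j : Grp k F) : Prop :=
  (∀ s ∈ S, le s j) ∧ ∀ w, (∀ s ∈ S, le s w) → le j w

/-- `y` is a segment of `a` if `a = x·y·z` for some `x, z`. -/
def Segment {k : ℕ} {F : Set (Sym2 (Fin k))} (y a : Grp k F) : Prop :=
  ∃ x z, a = x * y * z ∧ len a = len x + len y + len z

/-- The left-invariant metric `dist(x,y) = |x⁻¹y|`. -/
noncomputable def dist {k : ℕ} {F : Set (Sym2 (Fin k))} (x y : Grp k F) : ℕ :=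
  len (x⁻¹ * y)

/-- A nonempty set `L` is convex if `x, z ∈ L` and `dist(x,y) + dist(y,z) = dist(x,z)`
imply `y ∈ L`. -/
def ConvexSet {k : ℕ} {F : Set (Sym2 (Fin k))} (L : Set (Grp k F)) : Prop :=
  L.Nonempty ∧ ∀ x z y : Grp k F, x ∈ L → z ∈ L →
    dist x y + dist y z = dist x z → y ∈ L

/-- An ideal: nonempty, downward closed, and closed under finite joins. -/
def IdealSet {k : ℕ} {F : Set (Sym2 (Fin k))} (I : Set (Grp k F)) : Prop :=
  I.Nonempty ∧ (∀ x ∈ I, ∀ y, le y x → y ∈ I) ∧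
    (∀ x ∈ I, ∀ y ∈ I, ∀ j, IsJoin x y j → j ∈ I)

/-- `H` is closed if both `H` and `H⁻¹` are ideals. -/
def ClosedSet {k : ℕ} {F : Set (Sym2 (Fin k))} (H : Set (Grp k F)) : Prop :=
  IdealSet H ∧ IdealSet H⁻¹

/-- `m` is a minimal element of `S` w.r.t. `le`. -/
def MinimalIn {k : ℕ} {F : Set (Sym2 (Fin k))} (S : Set (Grp k F)) (m : Grp k F) : Prop :=
  m ∈ S ∧ ∀ x ∈ S, le x m → x = m

/-- `l` is a reduced (i.e. shortest) word representing `x`. -/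
def MinWord {k : ℕ} {F : Set (Sym2 (Fin k))} (x : Grp k F) (l : List (Fin k × Bool)) : Prop :=
  wordProd k F l = x ∧ l.length = len x

open Classical in
/-- `#_α(x)`: the number of occurrences of the symbol `α` (not counting `α⁻¹`)
in a reduced word representing `x`. -/
noncomputable def symCount {k : ℕ} {F : Set (Sym2 (Fin k))} (α : Fin k × Bool)
    (x : Grp k F) : ℕ :=
  if h : ∃ l, MinWord x l then h.choose.count α else 0

/-- The symbol `α` occurs in `x`. -/
def Occurs {k : ℕ} {F : Set (Sym2 (Fin k))} (α : Fin k × Bool) (x : Grp k F) : Prop :=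
  0 < symCount α x

/-- `α` is a maximal symbol of `x`, i.e. `xα⁻¹ ≤ x`. -/
def MaxSym {k : ℕ} {F : Set (Sym2 (Fin k))} (α : Fin k × Bool) (x : Grp k F) : Prop :=
  le (x * (sym k F α)⁻¹) x

/-- A peak: an element with precisely one maximal symbol. -/
def IsPeak {k : ℕ} {F : Set (Sym2 (Fin k))} (p : Grp k F) : Prop :=
  ∃! α : Fin k × Bool, MaxSym α p

/-- An `α`-peak: a peak whose unique maximal symbol is `α`. -/
def AlphaPeak {k : ℕ} {F : Set (Sym2 (Fin k))} (α : Fin k × Bool) (p : Grp k F) : Prop :=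
  MaxSym α p ∧ ∀ β, MaxSym β p → β = α

/-- The set of generator indices occurring in `b`. -/
def Support {k : ℕ} {F : Set (Sym2 (Fin k))} (b : Grp k F) : Set (Fin k) :=
  {i | Occurs (i, true) b ∨ Occurs (i, false) b}

/-- `b` is connected: the generators occurring in `b` induce a connected subgraph of
the graph `([k], F)`. -/
def Conn {k : ℕ} {F : Set (Sym2 (Fin k))} (b : Grp k F) : Prop :=
  (SimpleGraph.induce (Support b) (SimpleGraph.fromEdgeSet F)).Connected

/-- `b` is cyclically reduced: `b ∧ b⁻¹ = 1`. -/
def CycRed {k : ℕ} {F : Set (Sym2 (Fin k))} (b : Grp k F) : Prop :=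
  IsMeet b b⁻¹ 1

/-!
Since `g ∈ L₁L₃⁻¹` means `L₁ ∩ gL₃ ≠ ∅`, the claim is the Helly property of the pairwise
intersecting convex sets `L₁`, `L₂`, `gL₃`. It follows from the existence of medians: for all
`x, y, z` some `m` lies on a geodesic between any two of them, and a median of three points taken
in the pairwise intersections lies in all three sets.

A median of `1, y, z` is found by stripping common first letters of `y` and `z`; when there is
none, `|y⁻¹z| = |y| + |z|` because the concatenation of reduced words for `y⁻¹` and `z` is reduced.
A word is reduced if no swaps of adjacent commuting letters bring a letter next to its inverse, and
reduced words are geodesic: the group acts on swap classes of reduced words by prepending a letter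
(cancelling it when possible), and a word of length `n` moves the empty word to a class of length
at most `n`. Swap classes are handled through their projections onto pairs of non-commuting letters.
-/

lemma _root_.Set.mem_mul_inv_iff_inter_smul_nonempty {G : Type*} [Group G] {L M : Set G} {g : G} :
    g ∈ L * M⁻¹ ↔ (L ∩ g • M).Nonempty := by
  simp only [Set.mem_mul, Set.mem_inv, Set.Nonempty, Set.mem_inter_iff,
    Set.mem_smul_set_iff_inv_smul_mem, smul_eq_mul]
  constructor
  · rintro ⟨x, hx, y, hy, rfl⟩
    exact ⟨x, hx, by simpa [mul_assoc] using hy⟩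
  · rintro ⟨x, hx, hgx⟩
    exact ⟨x, hx, x⁻¹ * g, by simpa using hgx, by simp⟩

abbrev Letter (k : ℕ) := Fin k × Bool

namespace Letter

variable {k : ℕ}

def inv (a : Letter k) : Letter k := (a.1, !a.2)

@[simp] lemma inv_inv (a : Letter k) : a.inv.inv = a := by
  simp [inv]

@[simp] lemma invRev_cons (a : Letter k) (l : List (Letter k)) :
    FreeGroup.invRev (a :: l) = FreeGroup.invRev l ++ [a.inv] := by
  simp [FreeGroup.invRev, inv]

def Indep (F : Set (Sym2 (Fin k))) (a b : Letter k) : Prop :=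
  a.1 ≠ b.1 ∧ s(a.1, b.1) ∉ F

variable {F : Set (Sym2 (Fin k))} {a b : Letter k}

lemma Indep.symm (h : Indep F a b) : Indep F b a :=
  ⟨h.1.symm, Sym2.eq_swap (a := a.1) ▸ h.2⟩

@[simp] lemma indep_inv_left : Indep F a.inv b ↔ Indep F a b := Iff.rfl

@[simp] lemma indep_inv_right : Indep F a b.inv ↔ Indep F a b := Iff.rfl

lemma not_indep_self (a : Letter k) : ¬ Indep F a a := fun h => h.1 rfl

lemma Indep.ne (h : Indep F a b) : a ≠ b := by
  rintro rfl; exact not_indep_self a h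

lemma Indep.ne_inv (h : Indep F a b) : a ≠ b.inv := by
  rintro rfl; exact h.1 rfl

end Letter

open Letter
open FreeGroup (invRev)

variable {k : ℕ} {F : Set (Sym2 (Fin k))}

def TraceStep (F : Set (Sym2 (Fin k))) (u v : List (Letter k)) : Prop :=
  ∃ (l₁ l₂ : List (Letter k)) (a b : Letter k),
    Indep F a b ∧ u = l₁ ++ a :: b :: l₂ ∧ v = l₁ ++ b :: a :: l₂

def TraceEquiv (F : Set (Sym2 (Fin k))) : List (Letter k) → List (Letter k) → Prop :=
  Relation.ReflTransGen (TraceStep F)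

namespace TraceStep

variable {u v : List (Letter k)}

lemma symm (h : TraceStep F u v) : TraceStep F v u := by
  obtain ⟨l₁, l₂, a, b, hab, rfl, rfl⟩ := h
  exact ⟨l₁, l₂, b, a, hab.symm, rfl, rfl⟩

lemma append_left (p : List (Letter k)) (h : TraceStep F u v) :
    TraceStep F (p ++ u) (p ++ v) := by
  obtain ⟨l₁, l₂, a, b, hab, rfl, rfl⟩ := h
  exact ⟨p ++ l₁, l₂, a, b, hab, by simp, by simp⟩

lemma append_right (h : TraceStep F u v) (s : List (Letter k)) :
    TraceStep F (u ++ s) (v ++ s) := by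
  obtain ⟨l₁, l₂, a, b, hab, rfl, rfl⟩ := h
  exact ⟨l₁, l₂ ++ s, a, b, hab, by simp, by simp⟩

lemma invRev (h : TraceStep F u v) : TraceStep F (invRev u) (invRev v) := by
  obtain ⟨l₁, l₂, a, b, hab, rfl, rfl⟩ := h
  exact ⟨invRev l₂, invRev l₁, b.inv, a.inv, by simpa using hab.symm,
    by simp, by simp⟩

end TraceStep

lemma traceStep_cons_cons {a b : Letter k} (hab : Indep F a b) (l : List (Letter k)) :
    TraceStep F (a :: b :: l) (b :: a :: l) :=
  ⟨[], l, a, b, hab, rfl, rfl⟩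

namespace TraceEquiv

variable {u v w : List (Letter k)}

@[refl] lemma refl (u : List (Letter k)) : TraceEquiv F u u := Relation.ReflTransGen.refl

lemma trans (h : TraceEquiv F u v) (h' : TraceEquiv F v w) : TraceEquiv F u w :=
  Relation.ReflTransGen.trans h h'

lemma symm (h : TraceEquiv F u v) : TraceEquiv F v u := by
  induction h with
  | refl => rfl
  | tail _ hs ih => exact Relation.ReflTransGen.head hs.symm ih

lemma append_left (p : List (Letter k)) (h : TraceEquiv F u v) :
    TraceEquiv F (p ++ u) (p ++ v) :=
  Relation.ReflTransGen.lift (p ++ ·) (fun _ _ => TraceStep.append_left p) _ _ h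

lemma append_right (h : TraceEquiv F u v) (s : List (Letter k)) :
    TraceEquiv F (u ++ s) (v ++ s) :=
  Relation.ReflTransGen.lift (· ++ s) (fun _ _ h => h.append_right s) _ _ h

lemma cons (c : Letter k) (h : TraceEquiv F u v) : TraceEquiv F (c :: u) (c :: v) :=
  h.append_left [c]

lemma invRev (h : TraceEquiv F u v) : TraceEquiv F (invRev u) (invRev v) :=
  Relation.ReflTransGen.lift FreeGroup.invRev (fun _ _ => TraceStep.invRev) _ _ h

lemma length_eq (h : TraceEquiv F u v) : u.length = v.length := by
  induction h with
  | refl => rfl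
  | tail _ hs ih =>
    obtain ⟨l₁, l₂, a, b, _, rfl, rfl⟩ := hs
    simpa using ih

end TraceEquiv

lemma TraceStep.traceEquiv {u v : List (Letter k)} (h : TraceStep F u v) : TraceEquiv F u v :=
  Relation.ReflTransGen.single h

lemma traceEquiv_move_front {a : Letter k} {l₁ l₂ : List (Letter k)}
    (h : ∀ b ∈ l₁, Indep F a b) : TraceEquiv F (l₁ ++ a :: l₂) (a :: (l₁ ++ l₂)) := by
  induction l₁ with
  | nil => rfl
  | cons c t ih =>
    refine ((ih fun b hb => h b (List.mem_cons_of_mem _ hb)).cons c).trans ?_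
    exact (traceStep_cons_cons (h c List.mem_cons_self).symm _).traceEquiv

def pairProj (x y : Letter k) (l : List (Letter k)) : List (Letter k) :=
  l.filter (fun c => c = x ∨ c = y)

def ProjEq (F : Set (Sym2 (Fin k))) (u v : List (Letter k)) : Prop :=
  ∀ x y, ¬ Indep F x y → pairProj x y u = pairProj x y v

section pairProj

variable {x y c : Letter k} {l l' : List (Letter k)}

lemma pairProj_cons_of_mem (h : c = x ∨ c = y) :
    pairProj x y (c :: l) = c :: pairProj x y l := by
  simp [pairProj, h]

lemma pairProj_cons_of_not_mem (h : ¬ (c = x ∨ c = y)) :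
    pairProj x y (c :: l) = pairProj x y l := by
  simp [pairProj, h]

lemma pairProj_append : pairProj x y (l ++ l') = pairProj x y l ++ pairProj x y l' :=
  List.filter_append ..

lemma pairProj_append_of_mem (hy : y ∈ l) (hx : x ∉ l) :
    ∃ s, pairProj x y (l ++ l') = y :: s := by
  induction l with
  | nil => simp at hy
  | cons c l ih =>
    rw [List.cons_append]
    by_cases hcy : c = y
    · subst hcy
      exact ⟨_, pairProj_cons_of_mem (Or.inr rfl)⟩
    · have hcx : c ≠ x := fun h => hx (h ▸ List.mem_cons_self)
      rw [pairProj_cons_of_not_mem (by tauto)]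
      exact ih ((List.mem_cons.1 hy).resolve_left (Ne.symm hcy))
        (fun h => hx (List.mem_cons_of_mem _ h))

end pairProj

lemma TraceStep.projEq {u v : List (Letter k)} (h : TraceStep F u v) : ProjEq F u v := by
  obtain ⟨l₁, l₂, a, b, hab, rfl, rfl⟩ := h
  intro x y hxy
  simp only [pairProj_append]
  congr 1
  by_cases ha : a = x ∨ a = y <;> by_cases hb : b = x ∨ b = y
  · exfalso
    rcases ha with rfl | rfl <;> rcases hb with rfl | rfl
    exacts [hab.ne rfl, hxy hab, hxy hab.symm, hab.ne rfl]
  all_goals simp [pairProj_cons_of_mem, pairProj_cons_of_not_mem, ha, hb]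

lemma TraceEquiv.projEq {u v : List (Letter k)} (h : TraceEquiv F u v) : ProjEq F u v := by
  induction h with
  | refl => exact fun _ _ _ => rfl
  | tail _ hs ih => exact fun x y hxy => (ih x y hxy).trans (hs.projEq x y hxy)

namespace ProjEq

variable {a : Letter k} {u v : List (Letter k)}

lemma cons_cancel (h : ProjEq F (a :: u) (a :: v)) : ProjEq F u v := by
  intro x y hxy
  have := h x y hxy
  by_cases ha : a = x ∨ a = y
  · rw [pairProj_cons_of_mem ha, pairProj_cons_of_mem ha] at this
    exact List.cons_injective this
  · rwa [pairProj_cons_of_not_mem ha, pairProj_cons_of_not_mem ha] at this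

lemma mem_of_cons (h : ProjEq F (a :: u) v) : a ∈ v := by
  have := h a a (not_indep_self a)
  rw [pairProj_cons_of_mem (Or.inl rfl)] at this
  exact List.mem_of_mem_filter (this ▸ List.mem_cons_self)

lemma exists_split (h : ProjEq F (a :: u) v) :
    ∃ v₁ v₂, v = v₁ ++ a :: v₂ ∧ (∀ b ∈ v₁, Indep F a b) ∧ ProjEq F u (v₁ ++ v₂) := by
  obtain ⟨v₁, v₂, rfl, hav₁⟩ := List.eq_append_cons_of_mem h.mem_of_cons
  have hind : ∀ b ∈ v₁, Indep F a b := by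
    intro b hb
    by_contra hab
    obtain ⟨s, hs⟩ := pairProj_append_of_mem (l' := a :: v₂) hb hav₁
    have := h a b hab
    rw [pairProj_cons_of_mem (Or.inl rfl), hs] at this
    exact hav₁ ((List.cons_eq_cons.1 this).1 ▸ hb)
  refine ⟨v₁, v₂, rfl, hind, fun x y hxy => ?_⟩
  have := h x y hxy
  rw [pairProj_append] at this ⊢
  by_cases ha : a = x ∨ a = y
  · have hnil : pairProj x y v₁ = [] := by
      refine List.filter_eq_nil_iff.2 fun b hb hbxy => ?_
      have hab := hind b hb
      simp only [decide_eq_true_eq] at hbxy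
      rcases ha with rfl | rfl <;> rcases hbxy with rfl | rfl
      exacts [not_indep_self _ hab, hxy hab, hxy hab.symm, not_indep_self _ hab]
    rw [pairProj_cons_of_mem ha, pairProj_cons_of_mem ha, hnil] at this
    rw [hnil]
    exact List.cons_injective this
  · rwa [pairProj_cons_of_not_mem ha, pairProj_cons_of_not_mem ha] at this

lemma traceEquiv (h : ProjEq F u v) : TraceEquiv F u v := by
  induction u generalizing v with
  | nil =>
    cases v with
    | nil => rfl
    | cons c t =>
      have := h c c (not_indep_self c)
      simp [pairProj] at this
  | cons a u ih =>
    obtain ⟨v₁, v₂, rfl, hind, hu⟩ := h.exists_split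
    exact ((ih hu).cons a).trans (traceEquiv_move_front hind).symm

end ProjEq

namespace TraceEquiv

variable {a b : Letter k} {u v : List (Letter k)}

lemma cons_cancel (h : TraceEquiv F (a :: u) (a :: v)) : TraceEquiv F u v :=
  h.projEq.cons_cancel.traceEquiv

lemma levi (h : TraceEquiv F (a :: u) (b :: v)) (hab : a ≠ b) :
    Indep F a b ∧ ∃ t, TraceEquiv F u (b :: t) ∧ TraceEquiv F v (a :: t) := by
  obtain ⟨v₁, v₂, hv, hind, hu⟩ := h.projEq.exists_split
  cases v₁ with
  | nil => exact absurd (List.cons_eq_cons.1 hv).1.symm hab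
  | cons c v₁ =>
    obtain ⟨rfl, rfl⟩ := List.cons_eq_cons.1 hv
    exact ⟨hind b List.mem_cons_self, v₁ ++ v₂, hu.traceEquiv,
      traceEquiv_move_front fun x hx => hind x (List.mem_cons_of_mem _ hx)⟩

end TraceEquiv

def HasCancellation (F : Set (Sym2 (Fin k))) (u : List (Letter k)) : Prop :=
  ∃ (l₁ l₂ : List (Letter k)) (c : Letter k), TraceEquiv F u (l₁ ++ c :: c.inv :: l₂)

def IsReduced (F : Set (Sym2 (Fin k))) (u : List (Letter k)) : Prop :=
  ¬ HasCancellation F u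

section Reduced

variable {a : Letter k} {u v : List (Letter k)}

lemma HasCancellation.of_traceEquiv (h : TraceEquiv F u v) (hv : HasCancellation F v) :
    HasCancellation F u :=
  let ⟨l₁, l₂, c, hc⟩ := hv
  ⟨l₁, l₂, c, h.trans hc⟩

lemma IsReduced.of_traceEquiv (h : TraceEquiv F u v) (hu : IsReduced F u) : IsReduced F v :=
  fun hv => hu (hv.of_traceEquiv h)

lemma HasCancellation.cons (a : Letter k) (h : HasCancellation F u) :
    HasCancellation F (a :: u) :=
  let ⟨l₁, l₂, c, hc⟩ := h
  ⟨a :: l₁, l₂, c, hc.cons a⟩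

lemma IsReduced.of_cons (h : IsReduced F (a :: u)) : IsReduced F u :=
  fun hu => h (hu.cons a)

lemma hasCancellation_cons_inv (a : Letter k) (u : List (Letter k)) :
    HasCancellation F (a :: a.inv :: u) :=
  ⟨[], u, a, .refl _⟩

lemma isReduced_nil : IsReduced F ([] : List (Letter k)) := fun ⟨l₁, l₂, c, h⟩ => by
  simpa using h.length_eq

lemma HasCancellation.invRev (h : HasCancellation F u) : HasCancellation F (invRev u) := by
  obtain ⟨l₁, l₂, c, hc⟩ := h
  exact ⟨FreeGroup.invRev l₂, FreeGroup.invRev l₁, c, by simpa using hc.invRev⟩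

lemma IsReduced.invRev (h : IsReduced F u) : IsReduced F (invRev u) :=
  fun hu => h (by simpa using hu.invRev)

lemma hasCancellation_or_traceEquiv_inv_cons {l₁ l₂ : List (Letter k)} {c : Letter k}
    (h : TraceEquiv F (a :: u) (l₁ ++ c :: c.inv :: l₂)) :
    HasCancellation F u ∨ ∃ u', TraceEquiv F u (a.inv :: u') := by
  induction l₁ generalizing u with
  | nil =>
    by_cases hac : a = c
    · subst hac
      exact .inr ⟨l₂, h.cons_cancel⟩
    obtain ⟨-, t, hu, hc⟩ := h.levi hac
    by_cases hca : c.inv = a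
    · exact .inr ⟨t, by rwa [← hca, inv_inv]⟩
    obtain ⟨-, s, -, ht⟩ := hc.levi hca
    exact .inl ⟨[], s, c, hu.trans (ht.cons c)⟩
  | cons b l₁ ih =>
    by_cases hab : a = b
    · subst hab
      exact .inl ⟨l₁, l₂, c, h.cons_cancel⟩
    obtain ⟨hind, t, hu, ht⟩ := h.levi hab
    rcases ih ht.symm with ht' | ⟨t', ht'⟩
    · exact .inl ((ht'.cons b).of_traceEquiv hu)
    · refine .inr ⟨b :: t', (hu.trans (ht'.cons b)).trans ?_⟩
      exact (traceStep_cons_cons (by simpa using hind.symm) _).traceEquiv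

lemma exists_traceEquiv_inv_cons (h : ¬ IsReduced F (a :: u)) (hu : IsReduced F u) :
    ∃ u', TraceEquiv F u (a.inv :: u') := by
  obtain ⟨l₁, l₂, c, hc⟩ := not_not.1 h
  exact (hasCancellation_or_traceEquiv_inv_cons hc).resolve_left hu

end Reduced

section Words

lemma gen_commute {i j : Fin k} (hij : i ≠ j) (hF : s(i, j) ∉ F) :
    Commute (gen k F i) (gen k F j) := by
  rw [← commutatorElement_eq_one_iff_commute]
  simpa [commutatorElement_def, gen, PresentedGroup.of] using
    PresentedGroup.one_of_mem (rels := Rels k F) ⟨i, j, hij, hF, rfl⟩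

lemma sym_commute {a b : Letter k} (h : Indep F a b) : Commute (sym k F a) (sym k F b) := by
  have hg := gen_commute (F := F) h.1 h.2
  rcases a with ⟨i, _ | _⟩ <;> rcases b with ⟨j, _ | _⟩
  exacts [hg.inv_left.inv_right, hg.inv_left, hg.inv_right, hg]

lemma sym_inv (a : Letter k) : sym k F a.inv = (sym k F a)⁻¹ := by
  rcases a with ⟨i, _ | _⟩ <;> simp [sym, Letter.inv]

@[simp] lemma wordProd_nil : wordProd k F [] = 1 := rfl

@[simp] lemma wordProd_cons (a : Letter k) (l : List (Letter k)) :
    wordProd k F (a :: l) = sym k F a * wordProd k F l := by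
  simp [wordProd]

@[simp] lemma wordProd_append (l m : List (Letter k)) :
    wordProd k F (l ++ m) = wordProd k F l * wordProd k F m := by
  simp [wordProd]

@[simp] lemma wordProd_invRev (l : List (Letter k)) :
    wordProd k F (invRev l) = (wordProd k F l)⁻¹ := by
  induction l with
  | nil => simp
  | cons a t ih => simp [ih, sym_inv]

lemma TraceEquiv.wordProd_eq {u v : List (Letter k)} (h : TraceEquiv F u v) :
    wordProd k F u = wordProd k F v := by
  induction h with
  | refl => rfl
  | tail _ hs ih =>
    obtain ⟨l₁, l₂, a, b, hab, rfl, rfl⟩ := hs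
    simp only [ih, wordProd_append, wordProd_cons, ← mul_assoc, (sym_commute hab).eq]

lemma wordProd_surjective : Function.Surjective (wordProd k F) := by
  intro x
  induction x using PresentedGroup.induction_on with
  | H w =>
    induction w using FreeGroup.induction_on with
    | C1 => exact ⟨[], rfl⟩
    | of i => exact ⟨[(i, true)], by simp [sym, gen, PresentedGroup.of]⟩
    | inv_of i _ => exact ⟨[(i, false)], by simp [sym, gen, PresentedGroup.of]⟩
    | mul v w hv hw =>
      obtain ⟨l, hl⟩ := hv
      obtain ⟨m, hm⟩ := hw
      exact ⟨l ++ m, by simp [hl, hm]⟩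

lemma len_le_length {x : Grp k F} {l : List (Letter k)} (h : wordProd k F l = x) :
    len x ≤ l.length :=
  Nat.sInf_le ⟨l, h, rfl⟩

lemma exists_minWord (x : Grp k F) : ∃ l, MinWord x l := by
  obtain ⟨l, hl⟩ := wordProd_surjective (k := k) (F := F) x
  exact Nat.sInf_mem (s := {n | ∃ l, wordProd k F l = x ∧ l.length = n}) ⟨_, l, hl, rfl⟩

lemma HasCancellation.exists_wordProd_eq {u : List (Letter k)} (h : HasCancellation F u) :
    ∃ w, wordProd k F w = wordProd k F u ∧ w.length + 2 = u.length := by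
  obtain ⟨l₁, l₂, c, hc⟩ := h
  refine ⟨l₁ ++ l₂, ?_, ?_⟩
  · simp [hc.wordProd_eq, sym_inv]
  · simp [hc.length_eq]; omega

lemma MinWord.isReduced {x : Grp k F} {l : List (Letter k)} (h : MinWord x l) :
    IsReduced F l := fun hl => by
  obtain ⟨w, hw, hwl⟩ := hl.exists_wordProd_eq
  have := len_le_length (hw.trans h.1)
  have := h.2
  omega

end Words

def ReducedWord (k : ℕ) (F : Set (Sym2 (Fin k))) := {l : List (Letter k) // IsReduced F l}

instance ReducedWord.setoid : Setoid (ReducedWord k F) where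
  r u v := TraceEquiv F u.1 v.1
  iseqv := ⟨fun _ => .refl _, TraceEquiv.symm, TraceEquiv.trans⟩

def NormalForm (k : ℕ) (F : Set (Sym2 (Fin k))) := Quotient (ReducedWord.setoid (k := k) (F := F))

/-- For reduced `u` and `w`: `w` is the reduced form of the product `a u`. -/
def ActRel (F : Set (Sym2 (Fin k))) (a : Letter k) (u w : List (Letter k)) : Prop :=
  TraceEquiv F (a :: u) w ∨ TraceEquiv F u (a.inv :: w)

namespace ActRel

variable {a b : Letter k} {u v w w' : List (Letter k)}

lemma exists_reducedWord (a : Letter k) (u : ReducedWord k F) :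
    ∃ w : ReducedWord k F, ActRel F a u.1 w.1 := by
  by_cases h : IsReduced F (a :: u.1)
  · exact ⟨⟨_, h⟩, .inl (.refl _)⟩
  · obtain ⟨w, hw⟩ := exists_traceEquiv_inv_cons h u.2
    exact ⟨⟨w, (u.2.of_traceEquiv hw).of_cons⟩, .inr hw⟩

lemma unique (hw : IsReduced F w) (hw' : IsReduced F w')
    (h : ActRel F a u w) (h' : ActRel F a u w') : TraceEquiv F w w' := by
  rcases h with h | h <;> rcases h' with h' | h'
  · exact h.symm.trans h'
  · exact (hw.of_traceEquiv h.symm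
      ((hasCancellation_cons_inv a w').of_traceEquiv (h'.cons a))).elim
  · exact (hw'.of_traceEquiv h'.symm
      ((hasCancellation_cons_inv a w).of_traceEquiv (h.cons a))).elim
  · exact (h.symm.trans h').cons_cancel

lemma of_traceEquiv_left (huv : TraceEquiv F u v) (h : ActRel F a v w) : ActRel F a u w :=
  h.imp (fun h => (huv.cons a).trans h) (fun h => huv.trans h)

lemma inv (h : ActRel F a u w) : ActRel F a.inv w u :=
  h.elim (fun h => .inr (by simpa using h.symm)) (fun h => .inl h.symm)

lemma length_eq (h : ActRel F a u w) : w.length = u.length + 1 ∨ u.length = w.length + 1 :=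
  h.imp (fun h => by simpa using h.length_eq.symm) (fun h => by simpa using h.length_eq)

lemma exchange (hab : Indep F a b) (hu : IsReduced F u) (hv : IsReduced F v)
    (h₁ : ActRel F b u w) (h₂ : ActRel F a w v) :
    ∃ w', IsReduced F w' ∧ ActRel F a u w' ∧ ActRel F b w' v := by
  rcases h₁ with h₁ | h₁ <;> rcases h₂ with h₂ | h₂
  · have hau : IsReduced F (a :: u) := fun hc => hv <|
      (((hc.cons b).of_traceEquiv (traceStep_cons_cons hab _).traceEquiv).of_traceEquiv
        (h₁.cons a).symm).of_traceEquiv h₂.symm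
    refine ⟨a :: u, hau, .inl (.refl _), .inl ?_⟩
    exact (traceStep_cons_cons hab.symm _).traceEquiv.trans ((h₁.cons a).trans h₂)
  · obtain ⟨-, t, ht₁, ht₂⟩ := (h₁.trans h₂).levi (by simpa using hab.symm.ne_inv)
    exact ⟨t, (hv.of_traceEquiv ht₂).of_cons, .inr ht₁, .inl ht₂.symm⟩
  · have hw' : IsReduced F (b.inv :: a :: w) := by
      intro hc
      obtain ⟨z, hz⟩ := exists_traceEquiv_inv_cons (not_not.2 hc) (hv.of_traceEquiv h₂.symm)
      rw [inv_inv] at hz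
      obtain ⟨-, r, hr, -⟩ := hz.levi hab.ne
      have hc' : HasCancellation F (b.inv :: b :: r) := by
        simpa using hasCancellation_cons_inv (F := F) b.inv r
      exact hu (hc'.of_traceEquiv (h₁.trans (hr.cons _)))
    refine ⟨b.inv :: a :: w, hw', .inl ?_, .inr (h₂.cons _)⟩
    exact (h₁.cons a).trans (traceStep_cons_cons (by simpa using hab) _).traceEquiv
  · have hu' : TraceEquiv F u (a.inv :: b.inv :: v) :=
      (h₁.trans (h₂.cons _)).trans (traceStep_cons_cons (by simpa using hab.symm) _).traceEquiv
    exact ⟨b.inv :: v, (hu.of_traceEquiv hu').of_cons, .inr hu', .inr (.refl _)⟩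

end ActRel

noncomputable def ReducedWord.act (a : Letter k) (u : ReducedWord k F) : ReducedWord k F :=
  (ActRel.exists_reducedWord a u).choose

lemma ReducedWord.actRel_act (a : Letter k) (u : ReducedWord k F) :
    ActRel F a u.1 (u.act a).1 :=
  (ActRel.exists_reducedWord a u).choose_spec

namespace NormalForm

variable {a b : Letter k}

noncomputable def act (a : Letter k) : NormalForm k F → NormalForm k F :=
  Quotient.map (ReducedWord.act a) fun u v huv => ActRel.unique (u.act a).2 (v.act a).2
    (u.actRel_act a) ((v.actRel_act a).of_traceEquiv_left huv)

lemma act_mk_eq {u w : ReducedWord k F} (h : ActRel F a u.1 w.1) :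
    act a (⟦u⟧ : NormalForm k F) = ⟦w⟧ :=
  Quotient.sound (ActRel.unique (u.act a).2 w.2 (u.actRel_act a) h)

lemma act_inv_act (a : Letter k) (x : NormalForm k F) : act a.inv (act a x) = x := by
  induction x using Quotient.inductionOn with
  | h u => exact act_mk_eq (u.actRel_act a).inv

lemma act_act_inv (a : Letter k) (x : NormalForm k F) : act a (act a.inv x) = x := by
  simpa using act_inv_act a.inv x

lemma act_comm (hab : Indep F a b) (x : NormalForm k F) : act a (act b x) = act b (act a x) := by
  induction x using Quotient.inductionOn with
  | h u =>
    obtain ⟨w', hw', h₁, h₂⟩ := (u.actRel_act b).exchange hab u.2 ((u.act b).act a).2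
      ((u.act b).actRel_act a)
    have e₁ : act a (⟦u⟧ : NormalForm k F) = ⟦(⟨w', hw'⟩ : ReducedWord k F)⟧ := act_mk_eq h₁
    have e₂ : act b (⟦(⟨w', hw'⟩ : ReducedWord k F)⟧ : NormalForm k F) = ⟦(u.act b).act a⟧ :=
      act_mk_eq h₂
    exact e₂.symm.trans (congrArg (act b) e₁).symm

noncomputable def perm (a : Letter k) : Equiv.Perm (NormalForm k F) :=
  ⟨act a, act a.inv, act_inv_act a, act_act_inv a⟩

def length : NormalForm k F → ℕ :=
  Quotient.lift (fun u : ReducedWord k F => u.1.length) fun _ _ => TraceEquiv.length_eq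

def nil : NormalForm k F := ⟦⟨[], isReduced_nil⟩⟧

lemma length_act_le (a : Letter k) (x : NormalForm k F) : (act a x).length ≤ x.length + 1 := by
  induction x using Quotient.inductionOn with
  | h u =>
    change (u.act a).1.length ≤ u.1.length + 1
    rcases (u.actRel_act a).length_eq with h | h <;> omega

end NormalForm

open NormalForm in
noncomputable def toPerm : Grp k F →* Equiv.Perm (NormalForm k F) :=
  PresentedGroup.toGroup (f := fun i => perm (i, true)) <| by
    rintro r ⟨i, j, hij, hF, rfl⟩
    simp only [map_mul, map_inv, FreeGroup.lift_apply_of, mul_inv_eq_iff_eq_mul]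
    exact Equiv.ext (act_comm (a := (i, true)) (b := (j, true)) ⟨hij, hF⟩)

lemma toPerm_sym (a : Letter k) : toPerm (sym k F a) = NormalForm.perm a := by
  rcases a with ⟨i, _ | _⟩
  · simp only [sym, Bool.false_eq_true, ↓reduceIte, map_inv]
    rw [gen, toPerm, PresentedGroup.toGroup.of]
    rfl
  · exact PresentedGroup.toGroup.of _

lemma toPerm_wordProd_cons (a : Letter k) (l : List (Letter k)) (x : NormalForm k F) :
    toPerm (wordProd k F (a :: l)) x = NormalForm.act a (toPerm (wordProd k F l) x) := by
  rw [wordProd_cons, map_mul, Equiv.Perm.mul_apply, toPerm_sym]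
  rfl

lemma length_toPerm_wordProd_le (l : List (Letter k)) :
    (toPerm (wordProd k F l) NormalForm.nil).length ≤ l.length := by
  induction l with
  | nil => exact le_rfl
  | cons a t ih =>
    rw [toPerm_wordProd_cons]
    exact (NormalForm.length_act_le _ _).trans (by simpa using ih)

lemma toPerm_wordProd_of_isReduced {u : List (Letter k)} (hu : IsReduced F u) :
    toPerm (wordProd k F u) NormalForm.nil = ⟦⟨u, hu⟩⟧ := by
  induction u with
  | nil => rfl
  | cons a t ih =>
    rw [toPerm_wordProd_cons, ih hu.of_cons]
    exact NormalForm.act_mk_eq (.inl (.refl _))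

theorem IsReduced.length_eq_len {u : List (Letter k)} (hu : IsReduced F u) :
    u.length = len (wordProd k F u) := by
  obtain ⟨l, hl, hlen⟩ := exists_minWord (wordProd k F u)
  have := length_toPerm_wordProd_le (F := F) l
  rw [hl, toPerm_wordProd_of_isReduced hu] at this
  exact le_antisymm (hlen ▸ this) (len_le_length rfl)

section Length

lemma len_one : len (1 : Grp k F) = 0 :=
  Nat.le_zero.1 (len_le_length (l := []) rfl)

lemma len_inv_le (x : Grp k F) : len x⁻¹ ≤ len x := by
  obtain ⟨l, hl, hlen⟩ := exists_minWord x
  simpa [hlen] using len_le_length (x := x⁻¹) (l := invRev l) (by simp [hl])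

@[simp] lemma len_inv (x : Grp k F) : len x⁻¹ = len x :=
  le_antisymm (len_inv_le x) (by simpa using len_inv_le x⁻¹)

lemma len_mul_le (x y : Grp k F) : len (x * y) ≤ len x + len y := by
  obtain ⟨l, hl, hlen⟩ := exists_minWord x
  obtain ⟨m, hm, hmlen⟩ := exists_minWord y
  simpa [hlen, hmlen] using len_le_length (x := x * y) (l := l ++ m) (by simp [hl, hm])

lemma len_sym_le (a : Letter k) : len (sym k F a) ≤ 1 :=
  len_le_length (l := [a]) (by simp)

@[simp] lemma dist_mul_left (g x y : Grp k F) : dist (g * x) (g * y) = dist x y := by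
  simp [dist, mul_assoc]

@[simp] lemma dist_one_left (x : Grp k F) : dist 1 x = len x := by
  simp [dist]

lemma dist_triangle (x y z : Grp k F) : dist x z ≤ dist x y + dist y z := by
  simpa [dist, mul_assoc] using len_mul_le (x⁻¹ * y) (y⁻¹ * z)

end Length

section Median

def FirstLetter (a : Letter k) (x : Grp k F) : Prop :=
  ∃ t, IsReduced F (a :: t) ∧ wordProd k F (a :: t) = x

lemma FirstLetter.len_eq {a : Letter k} {x : Grp k F} (h : FirstLetter a x) :
    len x = len ((sym k F a)⁻¹ * x) + 1 := by
  obtain ⟨t, ht, rfl⟩ := h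
  have h₁ := ht.length_eq_len
  have h₂ := ht.of_cons.length_eq_len
  simp only [wordProd_cons, inv_mul_cancel_left, List.length_cons] at h₁ ⊢
  omega

lemma exists_common_head_of_not_isReduced_invRev_append {u v : List (Letter k)}
    (hu : IsReduced F u) (hv : IsReduced F v) (h : ¬ IsReduced F (invRev u ++ v)) :
    ∃ a t s, TraceEquiv F u (a :: t) ∧ TraceEquiv F v (a :: s) := by
  induction v generalizing u with
  | nil => exact absurd (by simpa using hu.invRev) h
  | cons b v ih =>
    by_cases hbu : IsReduced F (b.inv :: u)
    · obtain ⟨a, t, s, hat, has⟩ := ih hbu hv.of_cons (by simpa using h)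
      by_cases hab : b.inv = a
      · subst hab
        have hc : HasCancellation F (b :: b.inv :: s) := hasCancellation_cons_inv b s
        exact absurd (hc.of_traceEquiv (has.cons b)) hv
      obtain ⟨hind, t', hu', -⟩ := hat.levi hab
      have hswap : TraceEquiv F (b :: a :: s) (a :: b :: s) :=
        (traceStep_cons_cons (a := b) hind s).traceEquiv
      exact ⟨a, t', b :: s, hu', (has.cons b).trans hswap⟩
    · obtain ⟨u', hu'⟩ := exists_traceEquiv_inv_cons hbu hu
      exact ⟨b, u', v, by simpa using hu', .refl _⟩

lemma len_inv_mul_of_forall_not_firstLetter {y z : Grp k F}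
    (h : ∀ a, ¬ (FirstLetter a y ∧ FirstLetter a z)) : len (y⁻¹ * z) = len y + len z := by
  obtain ⟨u, hu⟩ := exists_minWord y
  obtain ⟨v, hv⟩ := exists_minWord z
  by_cases hred : IsReduced F (invRev u ++ v)
  · have := hred.length_eq_len
    simp only [List.length_append, FreeGroup.invRev_length, wordProd_append, wordProd_invRev,
      hu.1, hv.1, hu.2, hv.2] at this
    exact this.symm
  obtain ⟨a, t, s, hat, has⟩ :=
    exists_common_head_of_not_isReduced_invRev_append hu.isReduced hv.isReduced hred
  exact absurd ⟨⟨t, hu.isReduced.of_traceEquiv hat, hat.wordProd_eq.symm.trans hu.1⟩,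
    ⟨s, hv.isReduced.of_traceEquiv has, has.wordProd_eq.symm.trans hv.1⟩⟩ (h a)

lemma dist_one_mul_add_dist_mul {s m y : Grp k F} (hs : len s ≤ 1)
    (hy : len (s * y) = len y + 1) (h : dist 1 m + dist m y = dist 1 y) :
    dist 1 (s * m) + dist (s * m) (s * y) = dist 1 (s * y) := by
  have h₁ := dist_triangle 1 s (s * m)
  have h₂ := dist_triangle 1 (s * m) (s * y)
  simp only [dist, inv_one, one_mul, mul_inv_rev, mul_assoc, inv_mul_cancel_left] at *
  omega

lemma exists_median_one (y z : Grp k F) : ∃ m, dist 1 m + dist m y = dist 1 y ∧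
    dist 1 m + dist m z = dist 1 z ∧ dist y m + dist m z = dist y z := by
  induction hN : len y + len z using Nat.strong_induction_on generalizing y z with
  | _ N ih =>
    by_cases hcom : ∃ a, FirstLetter a y ∧ FirstLetter a z
    · obtain ⟨a, hay, haz⟩ := hcom
      have hy := hay.len_eq
      have hz := haz.len_eq
      set s := sym k F a
      obtain ⟨y', rfl⟩ : ∃ y', y = s * y' := ⟨_, (mul_inv_cancel_left s y).symm⟩
      obtain ⟨z', rfl⟩ : ∃ z', z = s * z' := ⟨_, (mul_inv_cancel_left s z).symm⟩
      simp only [inv_mul_cancel_left] at hy hz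
      obtain ⟨m, h₁, h₂, h₃⟩ := ih _ (by omega) y' z' rfl
      exact ⟨s * m, dist_one_mul_add_dist_mul (len_sym_le a) hy h₁,
        dist_one_mul_add_dist_mul (len_sym_le a) hz h₂, by simpa using h₃⟩
    · refine ⟨1, by simp [len_one], by simp [len_one], ?_⟩
      simpa [dist] using (len_inv_mul_of_forall_not_firstLetter fun a h => hcom ⟨a, h⟩).symm

theorem exists_median (x y z : Grp k F) : ∃ m, dist x m + dist m y = dist x y ∧
    dist x m + dist m z = dist x z ∧ dist y m + dist m z = dist y z := by
  obtain ⟨m, h₁, h₂, h₃⟩ := exists_median_one (x⁻¹ * y) (x⁻¹ * z)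
  exact ⟨x * m, by simpa [dist, mul_assoc] using h₁, by simpa [dist, mul_assoc] using h₂,
    by simpa [dist, mul_assoc] using h₃⟩

end Median

section Convex

variable {L₁ L₂ L₃ : Set (Grp k F)}

lemma ConvexSet.smul (h : ConvexSet L₁) (g : Grp k F) : ConvexSet (g • L₁) := by
  refine ⟨h.1.smul_set, fun x z y hx hz hxyz => ?_⟩
  rw [Set.mem_smul_set_iff_inv_smul_mem] at hx hz ⊢
  exact h.2 _ _ _ hx hz (by simpa [smul_eq_mul] using hxyz)

theorem ConvexSet.inter_inter_nonempty (h₁ : ConvexSet L₁) (h₂ : ConvexSet L₂)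
    (h₃ : ConvexSet L₃) (h₁₂ : (L₁ ∩ L₂).Nonempty) (h₁₃ : (L₁ ∩ L₃).Nonempty)
    (h₂₃ : (L₂ ∩ L₃).Nonempty) : (L₁ ∩ L₂ ∩ L₃).Nonempty := by
  obtain ⟨p, hp₁, hp₂⟩ := h₁₂
  obtain ⟨q, hq₁, hq₃⟩ := h₁₃
  obtain ⟨r, hr₂, hr₃⟩ := h₂₃
  obtain ⟨m, hpq, hpr, hqr⟩ := exists_median p q r
  exact ⟨m, ⟨h₁.2 p q m hp₁ hq₁ hpq, h₂.2 p r m hp₂ hr₂ hpr⟩, h₃.2 q r m hq₃ hr₃ hqr⟩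

end Convex

theorem stmt8_general {k : ℕ} {F : Set (Sym2 (Fin k))}
    (L₁ L₂ L₃ : Set (Grp k F))
    (h1 : ConvexSet L₁) (h2 : ConvexSet L₂) (h3 : ConvexSet L₃)
    (h12 : (L₁ ∩ L₂).Nonempty) :
    (L₁ * L₃⁻¹) ∩ (L₂ * L₃⁻¹) = (L₁ ∩ L₂) * L₃⁻¹ := by
  refine subset_antisymm ?_ (Set.subset_inter (Set.mul_subset_mul_right Set.inter_subset_left)
    (Set.mul_subset_mul_right Set.inter_subset_right))
  rintro g ⟨hg₁, hg₂⟩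
  rw [Set.mem_mul_inv_iff_inter_smul_nonempty] at hg₁ hg₂ ⊢
  exact h1.inter_inter_nonempty h2 (h3.smul g) h12 hg₁ hg₂

/-- for convex `L₁, L₂, L₃` with `L₁ ∩ L₂ ≠ ∅`,
`L₁L₃⁻¹ ∩ L₂L₃⁻¹ = (L₁ ∩ L₂)L₃⁻¹`. -/
theorem stmt8 {k : ℕ} (hk : 1 ≤ k) {F : Set (Sym2 (Fin k))}
    (L₁ L₂ L₃ : Set (Grp k F))
    (h1 : ConvexSet L₁) (h2 : ConvexSet L₂) (h3 : ConvexSet L₃)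
    (h12 : (L₁ ∩ L₂).Nonempty) :
    (L₁ * L₃⁻¹) ∩ (L₂ * L₃⁻¹) = (L₁ ∩ L₂) * L₃⁻¹ :=
  stmt8_general L₁ L₂ L₃ h1 h2 h3 h12

end GraphGroupPaper
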